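/- Let c ∈ Mat_n(ℂ) be a positive definite (positive invertible) matrix. Equip Mat_n(ℂ) with the inner product ⟨x, y⟩ = Tr(y* x c) · Tr(c^{-1}) (linear in the first variable), and equip the algebraic tensor product Mat_n(ℂ) ⊗ Mat_n(ℂ) with the induced inner product ⟨a ⊗ b, c' ⊗ d⟩ = ⟨a, c'⟩⟨b, d⟩. Then the multiplication map m : Mat_n(ℂ) ⊗ Mat_n(ℂ) → Mat_n(ℂ) satisfies m m* = id, where m* is the adjoint of m with respect to these inner products. -/

import Mathlib

/-!
STATEMENT 5.  Let c ∈ Mat_n(ℂ) be positive definite.  Equip Mat_n(ℂ) with the inner product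
⟨x, y⟩ = Tr(y* x c) · Tr(c⁻¹) (in Mathlib's convention, conjugate-linear in the first slot:
⟪x, y⟫ = Tr(x* y c) · Tr(c⁻¹)), and Mat_n(ℂ) ⊗ Mat_n(ℂ) with the induced inner product.
Then the multiplication map m satisfies m m* = id, where m* is the adjoint of m.

The adjoint is encoded as the (unique) linear map `mstar` satisfying the pairing identity
⟪a ⊗ b, m* y⟫ = ⟪m(a ⊗ b), y⟫ = ⟪a * b, y⟫, where ⟪a ⊗ b, ·⟫ is implemented by
`matPair c a b`, and m on the tensor product is `LinearMap.mul' ℂ _`.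
-/

open scoped TensorProduct ComplexOrder

/-- The inner product `⟪a, ·⟫ = Tr(aᴴ · c) Tr(c⁻¹)` as a linear functional on `Mat_n(ℂ)`. -/
noncomputable def matInn {n : ℕ} (c a : Matrix (Fin n) (Fin n) ℂ) :
    Matrix (Fin n) (Fin n) ℂ →ₗ[ℂ] ℂ where
  toFun y := (a.conjTranspose * y * c).trace * c⁻¹.trace
  map_add' x y := by
    simp [Matrix.mul_add, Matrix.add_mul, Matrix.trace_add, add_mul]
  map_smul' r x := by
    simp only [Matrix.mul_smul, Matrix.smul_mul, Matrix.trace_smul, smul_eq_mul,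
      RingHom.id_apply]
    ring

/-- The linear functional `⟪a ⊗ b, ·⟫` on `Mat_n(ℂ) ⊗ Mat_n(ℂ)` for the induced inner
product. -/
noncomputable def matPair {n : ℕ} (c a b : Matrix (Fin n) (Fin n) ℂ) :
    TensorProduct ℂ (Matrix (Fin n) (Fin n) ℂ) (Matrix (Fin n) (Fin n) ℂ) →ₗ[ℂ] ℂ :=
  TensorProduct.lift ((LinearMap.mul ℂ ℂ).compl₁₂ (matInn c a) (matInn c b))

/-! The adjoint of `m` is explicit: `m* y = Tr(c⁻¹)⁻¹ ∑_{k,l} y E_{lk} c⁻¹ ⊗ E_{kl}`.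
The pairing identity reduces to the completeness relation `∑_{k,l} Tr(A E_{lk}) Tr(B E_{kl}) = Tr(AB)`
of the matrix units, and `m m* = id` to `∑_{k,l} E_{lk} x E_{kl} = Tr(x) • 1` at `x = c⁻¹`.
Uniqueness: when `c` is invertible and `Tr(c⁻¹) ≠ 0`, every linear functional on `Mat_n(ℂ)` is
`⟪a, ·⟫` for some `a`, so the functionals `⟪a ⊗ b, ·⟫` separate the points of the tensor product. -/

open Matrix

theorem TensorProduct.eq_zero_of_forall_dual_tmul_eq_zero {R M N : Type*} [CommSemiring R]
    [AddCommMonoid M] [Module R M] [Module.Free R M] [AddCommMonoid N] [Module R N]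
    [Module.Free R N] {t : M ⊗[R] N}
    (h : ∀ (f : Module.Dual R M) (g : Module.Dual R N),
      TensorProduct.lift ((LinearMap.mul R R).compl₁₂ f g) t = 0) :
    t = 0 := by
  let b := Module.Free.chooseBasis R M
  let b' := Module.Free.chooseBasis R N
  refine (b.tensorProduct b').repr.injective (Finsupp.ext fun ⟨i, j⟩ => ?_)
  have hcoord : TensorProduct.lift ((LinearMap.mul R R).compl₁₂ (b.coord i) (b'.coord j))
      = Finsupp.lapply (i, j) ∘ₗ (b.tensorProduct b').repr.toLinearMap :=
    TensorProduct.ext' fun x y => by simp [Module.Basis.tensorProduct_repr_tmul_apply, mul_comm]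
  simpa [hcoord] using h (b.coord i) (b'.coord j)

theorem Matrix.exists_trace_mul_eq {m R : Type*} [Fintype m] [DecidableEq m] [CommSemiring R]
    (f : Module.Dual R (Matrix m m R)) : ∃ B : Matrix m m R, ∀ y, f y = (B * y).trace := by
  let B : Matrix m m R := Matrix.of fun j i => f (single i j 1)
  have hf : f = Matrix.traceLinearMap m R R ∘ₗ LinearMap.mulLeft R B := by
    apply Matrix.ext_linearMap
    intro i j
    exact LinearMap.ext_ring (by simp [B, trace_mul_single])
  exact ⟨B, fun y => LinearMap.congr_fun hf y⟩

theorem Matrix.sum_trace_mul_single_mul_trace_mul_single {m R : Type*} [Fintype m]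
    [DecidableEq m] [CommSemiring R] (A B : Matrix m m R) :
    ∑ k, ∑ l, (A * single l k 1).trace * (B * single k l 1).trace = (A * B).trace := by
  simp only [trace_mul_single, MulOpposite.op_one, one_smul]
  simp [trace, mul_apply]

theorem Matrix.sum_single_mul_mul_single {m R : Type*} [Fintype m] [DecidableEq m]
    [CommSemiring R] (x : Matrix m m R) :
    ∑ k, ∑ l, single l k 1 * x * single k l 1 = x.trace • (1 : Matrix m m R) := by
  ext i j
  by_cases hij : i = j
  · subst hij
    simp [sum_apply, single_apply, trace]
  · have hne : ∀ k, ¬(k = i ∧ k = j) := fun k hk => hij (hk.1.symm.trans hk.2)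
    simp [sum_apply, hij, hne]

section MatrixInnerProduct

variable {n : ℕ} {c : Matrix (Fin n) (Fin n) ℂ}

theorem matInn_apply (c a y : Matrix (Fin n) (Fin n) ℂ) :
    matInn c a y = (aᴴ * y * c).trace * c⁻¹.trace :=
  rfl

theorem matPair_tmul (c a b x y : Matrix (Fin n) (Fin n) ℂ) :
    matPair c a b (x ⊗ₜ y) = matInn c a x * matInn c b y := by
  simp [matPair]

theorem matInn_surjective (hc : IsUnit c.det) (hTr : c⁻¹.trace ≠ 0) :
    Function.Surjective (matInn c) := by
  intro f
  obtain ⟨B, hB⟩ := Matrix.exists_trace_mul_eq f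
  refine ⟨((c⁻¹.trace)⁻¹ • (c⁻¹ * B))ᴴ, LinearMap.ext fun y => ?_⟩
  have hcB : c * ((c⁻¹.trace)⁻¹ • (c⁻¹ * B)) = (c⁻¹.trace)⁻¹ • B := by
    rw [Matrix.mul_smul, ← Matrix.mul_assoc, mul_nonsing_inv c hc, Matrix.one_mul]
  rw [matInn_apply, conjTranspose_conjTranspose, trace_mul_cycle, hcB, hB, Matrix.smul_mul,
    trace_smul, smul_eq_mul, mul_right_comm, inv_mul_cancel₀ hTr, one_mul]

theorem eq_zero_of_forall_matPair_eq_zero (hc : IsUnit c.det) (hTr : c⁻¹.trace ≠ 0)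
    {t : Matrix (Fin n) (Fin n) ℂ ⊗[ℂ] Matrix (Fin n) (Fin n) ℂ}
    (h : ∀ a b, matPair c a b t = 0) : t = 0 := by
  refine TensorProduct.eq_zero_of_forall_dual_tmul_eq_zero fun f g => ?_
  obtain ⟨a, rfl⟩ := matInn_surjective hc hTr f
  obtain ⟨b, rfl⟩ := matInn_surjective hc hTr g
  exact h a b

variable (c) in
noncomputable def matMulAdjoint :
    Matrix (Fin n) (Fin n) ℂ →ₗ[ℂ] Matrix (Fin n) (Fin n) ℂ ⊗[ℂ] Matrix (Fin n) (Fin n) ℂ :=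
  (c⁻¹.trace)⁻¹ • ∑ k, ∑ l,
    (TensorProduct.mk ℂ _ _).flip (single k l 1) ∘ₗ LinearMap.mulRight ℂ (single l k 1 * c⁻¹)

theorem matMulAdjoint_apply (y : Matrix (Fin n) (Fin n) ℂ) :
    matMulAdjoint c y = (c⁻¹.trace)⁻¹ • ∑ k, ∑ l, (y * single l k 1 * c⁻¹) ⊗ₜ single k l 1 := by
  simp [matMulAdjoint, LinearMap.sum_apply, Matrix.mul_assoc]

theorem matPair_matMulAdjoint (hc : IsUnit c.det) (a b y : Matrix (Fin n) (Fin n) ℂ) :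
    matPair c a b (matMulAdjoint c y) = matInn c (a * b) y := by
  have hleft : ∀ k l, (aᴴ * (y * single l k 1 * c⁻¹) * c).trace = (aᴴ * y * single l k 1).trace :=
    fun k l => by simp only [Matrix.mul_assoc, nonsing_inv_mul c hc, Matrix.mul_one]
  have hright : ∀ k l, (bᴴ * single k l 1 * c).trace = (c * bᴴ * single k l 1).trace :=
    fun k l => trace_mul_cycle _ _ _
  have hprod : (aᴴ * y * (c * bᴴ)).trace = ((a * b)ᴴ * y * c).trace := by
    rw [conjTranspose_mul, ← Matrix.mul_assoc, trace_mul_cycle]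
    simp only [Matrix.mul_assoc]
  rw [matMulAdjoint_apply, map_smul]
  simp only [map_sum, matPair_tmul, matInn_apply, hleft, hright]
  rw [← hprod, ← sum_trace_mul_single_mul_trace_mul_single]
  simp only [smul_eq_mul, Finset.mul_sum, Finset.sum_mul]
  refine Finset.sum_congr rfl fun k _ => Finset.sum_congr rfl fun l _ => ?_
  rcases eq_or_ne c⁻¹.trace 0 with hTr | hTr
  · simp [hTr]
  · field_simp

theorem mul'_matMulAdjoint (hTr : c⁻¹.trace ≠ 0) (y : Matrix (Fin n) (Fin n) ℂ) :
    LinearMap.mul' ℂ _ (matMulAdjoint c y) = y := by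
  simp only [matMulAdjoint_apply, map_smul, map_sum, LinearMap.mul'_apply, Matrix.mul_assoc,
    ← Matrix.mul_sum]
  simp only [← Matrix.mul_assoc (single _ _ _), sum_single_mul_mul_single, Matrix.mul_smul,
    Matrix.mul_one, smul_smul, inv_mul_cancel₀ hTr, one_smul]

end MatrixInnerProduct

theorem statement5 {n : ℕ} (c : Matrix (Fin n) (Fin n) ℂ) (hc : c.PosDef) :
    ∃ mstar : Matrix (Fin n) (Fin n) ℂ →ₗ[ℂ]
        TensorProduct ℂ (Matrix (Fin n) (Fin n) ℂ) (Matrix (Fin n) (Fin n) ℂ),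
      -- mstar is the adjoint of the multiplication map m …
      (∀ a b y : Matrix (Fin n) (Fin n) ℂ,
        matPair c a b (mstar y) = matInn c (a * b) y) ∧
      -- … (and it is the unique map with this property) …
      (∀ mstar' : Matrix (Fin n) (Fin n) ℂ →
          TensorProduct ℂ (Matrix (Fin n) (Fin n) ℂ) (Matrix (Fin n) (Fin n) ℂ),
        (∀ a b y : Matrix (Fin n) (Fin n) ℂ,
          matPair c a b (mstar' y) = matInn c (a * b) y) →
        ∀ y, mstar' y = mstar y) ∧
      -- … and m m* = id:
      (∀ y : Matrix (Fin n) (Fin n) ℂ,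
        LinearMap.mul' ℂ (Matrix (Fin n) (Fin n) ℂ) (mstar y) = y) := by
  have hdet : IsUnit c.det := c.isUnit_iff_isUnit_det.mp hc.isUnit
  refine ⟨matMulAdjoint c, matPair_matMulAdjoint hdet, fun mstar' hmstar' y => ?_, fun y => ?_⟩ <;>
    rcases isEmpty_or_nonempty (Fin n) with _ | _
  · exact Subsingleton.elim _ _
  · rw [← sub_eq_zero]
    refine eq_zero_of_forall_matPair_eq_zero hdet hc.inv.trace_pos.ne' fun a b => ?_
    rw [map_sub, hmstar', matPair_matMulAdjoint hdet, sub_self]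
  · exact Subsingleton.elim _ _
  · exact mul'_matMulAdjoint hc.inv.trace_pos.ne' y
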